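/- Assume Phi satisfies the Restricted Isometry Condition with parameters (4n, eps), 0 < eps < 1 (in particular for 2n-sparse vectors). Let v be any vector in R^d, v_n a best n-term approximation of v and v_{2n} a best 2n-term approximation of v with supp(v_n) ⊆ supp(v_{2n}). Then ||Phi(v - v_{2n})||_2 <= 1.5*(1+eps)*||v - v_n||_1 / sqrt(n). -/

import Mathlib

open scoped BigOperators

noncomputable def l2 {d : ℕ} (v : Fin d → ℝ) : ℝ := Real.sqrt (∑ i, (v i)^2)

noncomputable def l1 {d : ℕ} (v : Fin d → ℝ) : ℝ := ∑ i, |v i|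

noncomputable def linf {d : ℕ} (v : Fin d → ℝ) : ℝ := ⨆ i, |v i|

noncomputable def restrict {d : ℕ} (v : Fin d → ℝ) (T : Finset (Fin d)) : Fin d → ℝ :=
  fun i => if i ∈ T then v i else 0

open Classical in
noncomputable def spt {d : ℕ} (v : Fin d → ℝ) : Finset (Fin d) :=
  Finset.univ.filter (fun i => v i ≠ 0)

def RIC {N d : ℕ} (Φ : Matrix (Fin N) (Fin d) ℝ) (m : ℕ) (ε : ℝ) : Prop :=
  ∀ z : Fin d → ℝ, (spt z).card ≤ m →
    (1 - ε) * l2 z ≤ l2 (Φ.mulVec z) ∧ l2 (Φ.mulVec z) ≤ (1 + ε) * l2 z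

/-!
Let all `|w i| ≤ c` and peel off the `n` largest entries of `w` as one block `B`. By the RIC upper
bound the block contributes at most `(1 + ε) √n c` to `‖Φ w‖₂`, and every remaining entry is at most
the average of `|w|` over `B`, so induction on the support size gives
`‖Φ w‖₂ ≤ (1 + ε) (√n c + ‖w‖₁ / √n)`. For `w = v - v_{2n}` take for `c` the average of `|v|` over
the `n` indices of `T \ S`; then `√n c + ‖w‖₁ / √n = ‖v - v_n‖₁ / √n`, which is the claimed bound
even with `1` in place of `1.5`.
-/

open Finset hiding restrict
open Matrix

section Norms

variable {d : ℕ}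

lemma mem_spt {v : Fin d → ℝ} {i : Fin d} : i ∈ spt v ↔ v i ≠ 0 := by
  classical simp [spt]

lemma l1_nonneg (v : Fin d → ℝ) : 0 ≤ l1 v :=
  sum_nonneg fun _ _ => abs_nonneg _

lemma l2_eq_norm (v : Fin d → ℝ) : l2 v = ‖WithLp.toLp 2 v‖ := by
  simp [l2, EuclideanSpace.norm_eq, Real.norm_eq_abs, sq_abs]

lemma l2_add_le (v w : Fin d → ℝ) : l2 (v + w) ≤ l2 v + l2 w := by
  simpa only [l2_eq_norm, WithLp.toLp_add] using norm_add_le _ _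

lemma l2_le_sqrt_card_mul {w : Fin d → ℝ} {m : ℕ} {c : ℝ} (hm : (spt w).card ≤ m)
    (hc : 0 ≤ c) (hwc : ∀ i, |w i| ≤ c) : l2 w ≤ √m * c := by
  have hsum : ∑ i, w i ^ 2 ≤ m * c ^ 2 := by
    classical
    calc ∑ i, w i ^ 2 = ∑ i ∈ spt w, w i ^ 2 :=
          (sum_filter_of_ne fun i _ hi => pow_ne_zero_iff two_ne_zero |>.mp hi).symm
      _ ≤ (spt w).card • c ^ 2 :=
          sum_le_card_nsmul _ _ _ fun i _ => sq_le_sq' (abs_le.mp (hwc i)).1 (abs_le.mp (hwc i)).2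
      _ ≤ m * c ^ 2 := by rw [nsmul_eq_mul]; gcongr
  calc l2 w ≤ √(m * c ^ 2) := Real.sqrt_le_sqrt hsum
    _ = √m * c := by rw [Real.sqrt_mul (Nat.cast_nonneg m), Real.sqrt_sq hc]

end Norms

section Restrict

variable {d : ℕ}

lemma spt_restrict_subset (v : Fin d → ℝ) (T : Finset (Fin d)) : spt (restrict v T) ⊆ T := by
  intro i hi
  by_contra hiT
  exact mem_spt.mp hi (by simp [restrict, hiT])

lemma spt_sub_restrict_subset (v : Fin d → ℝ) (T : Finset (Fin d)) :
    spt (v - restrict v T) ⊆ spt v \ T := by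
  intro i hi
  by_cases hiT : i ∈ T <;> simp_all [mem_spt, restrict]

lemma abs_restrict_le {v : Fin d → ℝ} {c : ℝ} (T : Finset (Fin d)) (hc : 0 ≤ c)
    (hvc : ∀ i ∈ T, |v i| ≤ c) (i : Fin d) : |restrict v T i| ≤ c := by
  by_cases hiT : i ∈ T <;> simp [restrict, hiT, hc, hvc]

lemma abs_sub_restrict_le {v : Fin d → ℝ} {c : ℝ} (T : Finset (Fin d)) (hc : 0 ≤ c)
    (hvc : ∀ i ∉ T, |v i| ≤ c) (i : Fin d) : |(v - restrict v T) i| ≤ c := by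
  by_cases hiT : i ∈ T <;> simp [restrict, hiT, hc, hvc]

lemma l1_sub_restrict_of_subset (v : Fin d → ℝ) {S T : Finset (Fin d)} (hST : S ⊆ T) :
    l1 (v - restrict v S) = ∑ i ∈ T \ S, |v i| + l1 (v - restrict v T) := by
  rw [l1, l1, ← univ_inter (T \ S), ← sum_ite_mem, ← sum_add_distrib]
  refine sum_congr rfl fun i _ => ?_
  by_cases hiS : i ∈ S
  · simp [restrict, hiS, hST hiS]
  · by_cases hiT : i ∈ T <;> simp [restrict, hiS, hiT]

@[simp]
lemma restrict_empty (v : Fin d → ℝ) : restrict v ∅ = 0 := by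
  ext i
  simp [restrict]

lemma l1_eq_sum_add_l1_sub_restrict (v : Fin d → ℝ) (T : Finset (Fin d)) :
    l1 v = ∑ i ∈ T, |v i| + l1 (v - restrict v T) := by
  simpa using l1_sub_restrict_of_subset v (empty_subset T)

end Restrict

lemma le_sum_div_card_of_forall_le {ι : Type*} {s : Finset ι} {f : ι → ℝ} {x : ℝ}
    (hs : s.Nonempty) (h : ∀ i ∈ s, x ≤ f i) : x ≤ (∑ i ∈ s, f i) / s.card := by
  rw [le_div_iff₀ (by exact_mod_cast hs.card_pos), mul_comm, ← nsmul_eq_mul]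
  exact card_nsmul_le_sum s f x h

lemma exists_subset_card_eq_forall_le {ι : Type*} [DecidableEq ι] (f : ι → ℝ) {n : ℕ}
    {A : Finset ι} (hn : n ≤ A.card) :
    ∃ B ⊆ A, B.card = n ∧ ∀ i ∈ B, ∀ j ∈ A \ B, f j ≤ f i := by
  induction n generalizing A with
  | zero => exact ⟨∅, empty_subset A, rfl, by simp⟩
  | succ n ih =>
    obtain ⟨a, ha, ha_max⟩ := exists_max_image A f (card_pos.mp (by omega))
    obtain ⟨B, hBA, hBcard, hB_top⟩ := ih (A := A.erase a) (by rw [card_erase_of_mem ha]; omega)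
    have haB : a ∉ B := fun h => (mem_erase.mp (hBA h)).1 rfl
    refine ⟨insert a B, insert_subset ha (hBA.trans (erase_subset a A)), by
      rw [card_insert_of_notMem haB, hBcard], ?_⟩
    intro i hi j hj
    obtain ⟨hjA, hjB⟩ := mem_sdiff.mp hj
    rcases mem_insert.mp hi with rfl | hiB
    · exact ha_max j hjA
    · exact hB_top i hiB j (by simp_all)

lemma sqrt_mul_div_self (x a : ℝ) : √x * (a / x) = a / √x := by
  rw [mul_div_left_comm, Real.sqrt_div_self', mul_one_div]

theorem l2_mulVec_le_of_abs_le {N d n : ℕ} {K : ℝ} (Φ : Matrix (Fin N) (Fin d) ℝ) (hn : 0 < n)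
    (hK : 0 ≤ K) (hΦ : ∀ z : Fin d → ℝ, (spt z).card ≤ n → l2 (Φ *ᵥ z) ≤ K * l2 z)
    (w : Fin d → ℝ) {c : ℝ} (hc : 0 ≤ c) (hwc : ∀ i, |w i| ≤ c) :
    l2 (Φ *ᵥ w) ≤ K * (√n * c + l1 w / √n) := by
  classical
  induction hk : (spt w).card using Nat.strong_induction_on generalizing w c with
  | _ k ih =>
  rcases le_or_gt k n with hkn | hnk
  · calc l2 (Φ *ᵥ w) ≤ K * l2 w := hΦ w (hk ▸ hkn)
      _ ≤ K * (√n * c + l1 w / √n) := by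
        gcongr
        exact (l2_le_sqrt_card_mul (hk ▸ hkn) hc hwc).trans (le_add_of_nonneg_right (by
          have := l1_nonneg w; positivity))
  obtain ⟨B, hBw, hBcard, hB_top⟩ := exists_subset_card_eq_forall_le (fun i => |w i|) (hk ▸ hnk.le)
  set A := ∑ i ∈ B, |w i|
  have hBne : B.Nonempty := card_pos.mp (hBcard ▸ hn)
  have hA : 0 ≤ A / n := by positivity
  have h_head : l2 (Φ *ᵥ restrict w B) ≤ K * (√n * c) := by
    have hcard : (spt (restrict w B)).card ≤ n := hBcard ▸ card_le_card (spt_restrict_subset w B)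
    calc l2 (Φ *ᵥ restrict w B) ≤ K * l2 (restrict w B) := hΦ _ hcard
      _ ≤ K * (√n * c) := by
        gcongr
        exact l2_le_sqrt_card_mul hcard hc (abs_restrict_le B hc fun i _ => hwc i)
  have h_tail : l2 (Φ *ᵥ (w - restrict w B)) ≤ K * (√n * (A / n) + l1 (w - restrict w B) / √n) := by
    refine ih _ ?_ _ hA (abs_sub_restrict_le B hA fun j hjB => ?_) rfl
    · calc (spt (w - restrict w B)).card ≤ (spt w \ B).card :=
            card_le_card (spt_sub_restrict_subset w B)
        _ < k := by rw [card_sdiff_of_subset hBw]; omega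
    · by_cases hjw : w j = 0
      · simpa [hjw] using hA
      · exact hBcard ▸ le_sum_div_card_of_forall_le hBne fun i hiB =>
          hB_top i hiB j (mem_sdiff.mpr ⟨mem_spt.mpr hjw, hjB⟩)
  calc l2 (Φ *ᵥ w) = l2 (Φ *ᵥ restrict w B + Φ *ᵥ (w - restrict w B)) := by
        rw [← mulVec_add, add_sub_cancel]
    _ ≤ l2 (Φ *ᵥ restrict w B) + l2 (Φ *ᵥ (w - restrict w B)) := l2_add_le _ _
    _ ≤ K * (√n * c) + K * (√n * (A / n) + l1 (w - restrict w B) / √n) := add_le_add h_head h_tail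
    _ = K * (√n * c + l1 w / √n) := by
        rw [l1_eq_sum_add_l1_sub_restrict w B, sqrt_mul_div_self]
        ring

theorem stmt16_general {N d : ℕ} (Φ : Matrix (Fin N) (Fin d) ℝ) (n : ℕ) (hn : 0 < n) (ε : ℝ)
    (hε : 0 < ε) (hRIC : RIC Φ (4 * n) ε)
    (v : Fin d → ℝ)
    (S T : Finset (Fin d)) (hS : S.card = n) (hT : T.card = 2 * n) (hST : S ⊆ T)
    (hTbig : ∀ i ∈ T, ∀ j ∉ T, |v j| ≤ |v i|) :
    l2 (Φ.mulVec (v - restrict v T)) ≤ 1.5 * (1 + ε) * l1 (v - restrict v S) / Real.sqrt n := by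
  set A := ∑ i ∈ T \ S, |v i|
  have hTS : (T \ S).card = n := by rw [card_sdiff_of_subset hST, hS, hT]; omega
  have hA : 0 ≤ A / n := by positivity
  have h_tail : ∀ j ∉ T, |v j| ≤ A / n := fun j hjT =>
    hTS ▸ le_sum_div_card_of_forall_le (card_pos.mp (hTS ▸ hn)) fun i hi =>
      hTbig i (mem_sdiff.mp hi).1 j hjT
  have hΦ : ∀ z : Fin d → ℝ, (spt z).card ≤ n → l2 (Φ *ᵥ z) ≤ (1 + ε) * l2 z :=
    fun z hz => (hRIC z (by omega)).2
  calc l2 (Φ *ᵥ (v - restrict v T))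
      ≤ (1 + ε) * (√n * (A / n) + l1 (v - restrict v T) / √n) :=
        l2_mulVec_le_of_abs_le Φ hn (by linarith) hΦ _ hA (abs_sub_restrict_le T hA h_tail)
    _ = (1 + ε) * l1 (v - restrict v S) / √n := by
        rw [sqrt_mul_div_self, l1_sub_restrict_of_subset v hST]
        ring
    _ ≤ 1.5 * (1 + ε) * l1 (v - restrict v S) / √n := by
        have := l1_nonneg (v - restrict v S)
        gcongr
        linarith

/-- Bound on the measurements of the tail: ‖Φ(v - v_{2n})‖₂ ≤ 1.5(1+ε)‖v - v_n‖₁/√n. -/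
theorem stmt16 {N d : ℕ} (Φ : Matrix (Fin N) (Fin d) ℝ) (n : ℕ) (hn : 0 < n) (ε : ℝ)
    (hε : 0 < ε) (hε1 : ε < 1) (hRIC : RIC Φ (4 * n) ε)
    (v : Fin d → ℝ)
    (S T : Finset (Fin d)) (hS : S.card = n) (hT : T.card = 2 * n) (hST : S ⊆ T)
    (hSbig : ∀ i ∈ S, ∀ j ∉ S, |v j| ≤ |v i|)
    (hTbig : ∀ i ∈ T, ∀ j ∉ T, |v j| ≤ |v i|) :
    l2 (Φ.mulVec (v - restrict v T)) ≤ 1.5 * (1 + ε) * l1 (v - restrict v S) / Real.sqrt n :=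
  stmt16_general Φ n hn ε hε hRIC v S T hS hT hST hTbig
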